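/- arXiv:0910.0544 — 3 statements merged into one kernel-verified Lean document; each statement's English description precedes it below -/
import Mathlib

section
/- Let Y_1, ..., Y_n be i.i.d. random variables uniformly distributed on the interval (0, s) for some s > 0. If a = (a_1, ..., a_n) and b = (b_1, ..., b_n) are vectors of positive reals such that (log a_1, ..., log a_n) is majorized by (log b_1, ..., log b_n), then ∑_{i=1}^n a_i Y_i ≤_st ∑_{i=1}^n b_i Y_i. -/
open MeasureTheory ProbabilityTheory

/-- `a` is majorized by `b` (written `a ≺ b`). -/
def IsMajorizedBy {n : ℕ} (a b : Fin n → ℝ) : Prop :=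
  (∑ i, a i = ∑ i, b i) ∧
  ∀ k : Fin n, ∑ i ∈ Finset.Ici k, a (Tuple.sort a i) ≤ ∑ i ∈ Finset.Ici k, b (Tuple.sort b i)

/-!
Write the weights as `exp w`. As a function of the log-weights `w`, the tail probability
`P(t < ∑ exp (w i) * Y i)` is symmetric and decreases under every transfer that moves two
coordinates `w i ≤ w j` towards each other with their sum fixed. Since `log a ≺ log b`, the
sorted `log b` is carried to the sorted `log a` by finitely many such transfers, which gives the
claim.

A transfer replaces two weights `p ≤ q` by `p' ≤ q'` in `[p, q]` with `p' q' = p q`; conditioning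
on the other coordinates, it suffices to compare `p U + q V` with `p' U + q' V` for independent
uniforms `U`, `V`. The density of `pU + qV` is proportional to the trapezoid
`z ↦ |(0, ps) ∩ (z - qs, z)|`, with total mass `pq s²`; the two trapezoids therefore have the
same mass and cross exactly once, so the upper tails are ordered.
-/

open Set Function
open scoped ENNReal Finset

noncomputable def uniformIoo (s : ℝ) : Measure ℝ :=
  (ENNReal.ofReal s)⁻¹ • volume.restrict (Ioo 0 s)

instance (s : ℝ) : IsFiniteMeasure (uniformIoo s) :=
  ⟨by simp [uniformIoo, (ENNReal.inv_mul_le_one _).trans_lt ENNReal.one_lt_top]⟩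

lemma map_const_mul_uniformIoo {c : ℝ} (hc : 0 < c) (s : ℝ) :
    (uniformIoo s).map (c * ·) = uniformIoo (c * s) := by
  ext S hS
  have hpre : (c * ·) ⁻¹' S ∩ Ioo 0 s = (c * ·) ⁻¹' (S ∩ Ioo 0 (c * s)) := by
    ext x
    simp [mul_pos_iff_of_pos_left hc, mul_lt_mul_iff_right₀ hc]
  rw [Measure.map_apply (measurable_const_mul c) hS]
  simp only [uniformIoo, Measure.smul_apply, Measure.restrict_apply hS,
    Measure.restrict_apply (measurable_const_mul c hS), hpre, smul_eq_mul,
    Real.volume_preimage_mul_left hc.ne', abs_inv, abs_of_pos hc, ← mul_assoc]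
  rw [ENNReal.ofReal_inv_of_pos hc, ← ENNReal.mul_inv (by simp) (by simp),
    ← ENNReal.ofReal_mul' hc.le, mul_comm s c]

noncomputable def trapezoid (A B z : ℝ) : ℝ≥0∞ := volume (Ioo 0 A ∩ Ioo (z - B) z)

lemma trapezoid_eq (A B z : ℝ) :
    trapezoid A B z = ENNReal.ofReal (min (min A B) (min z (A + B - z))) := by
  rw [trapezoid, Ioo_inter_Ioo, Real.volume_Ioo]
  congr 1
  simp only [min_def, max_def]
  split_ifs <;> linarith

lemma setLIntegral_volume_Ioo_inter (A B : ℝ) (S : Set ℝ) :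
    ∫⁻ x in Ioo 0 A, volume (Ioo x (x + B) ∩ S) = ∫⁻ z in S, trapezoid A B z := by
  set W := {p : ℝ × ℝ | p.1 < p.2 ∧ p.2 < p.1 + B}
  have hW : MeasurableSet W :=
    (measurableSet_lt measurable_fst measurable_snd).inter
      (measurableSet_lt measurable_snd (by fun_prop))
  have hfst (x : ℝ) : Prod.mk x ⁻¹' W = Ioo x (x + B) := rfl
  have hsnd (z : ℝ) : (fun x => (x, z)) ⁻¹' W = Ioo (z - B) z := by
    ext x
    simp only [W, mem_preimage, mem_ofPred_eq, mem_Ioo]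
    constructor <;> intro h <;> constructor <;> linarith [h.1, h.2]
  have hswap := (Measure.prod_apply (μ := volume.restrict (Ioo 0 A)) (ν := volume.restrict S)
    hW).symm.trans (Measure.prod_apply_symm hW)
  simp only [hfst, hsnd, Measure.restrict_apply measurableSet_Ioo] at hswap
  simpa only [trapezoid, inter_comm] using hswap

lemma volume_restrict_prod_add_preimage (A B : ℝ) {S : Set ℝ} (hS : MeasurableSet S) :
    ((volume.restrict (Ioo 0 A)).prod (volume.restrict (Ioo 0 B))) ((fun x => x.1 + x.2) ⁻¹' S)
      = ∫⁻ z in S, trapezoid A B z := by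
  rw [Measure.prod_apply (measurable_add hS), ← setLIntegral_volume_Ioo_inter]
  refine lintegral_congr fun x => ?_
  have hpre : Prod.mk x ⁻¹' ((fun x => x.1 + x.2) ⁻¹' S) ∩ Ioo 0 B
      = (x + ·) ⁻¹' (Ioo x (x + B) ∩ S) := by
    ext y
    simp only [mem_inter_iff, mem_preimage, mem_Ioo, lt_add_iff_pos_right, add_lt_add_iff_left]
    tauto
  rw [Measure.restrict_apply (measurable_prodMk_left (measurable_add hS)), hpre,
    measure_preimage_add]

lemma lintegral_trapezoid {A B : ℝ} (hA : 0 ≤ A) :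
    ∫⁻ z, trapezoid A B z = ENNReal.ofReal (A * B) := by
  have hmass := volume_restrict_prod_add_preimage A B MeasurableSet.univ
  rw [preimage_univ, ← univ_prod_univ, Measure.prod_prod, setLIntegral_univ] at hmass
  simp [← hmass, ENNReal.ofReal_mul hA]

lemma uniformIoo_prod_add_preimage {A : ℝ} (hA : 0 ≤ A) (B : ℝ) {S : Set ℝ}
    (hS : MeasurableSet S) :
    ((uniformIoo A).prod (uniformIoo B)) ((fun x => x.1 + x.2) ⁻¹' S)
      = (ENNReal.ofReal (A * B))⁻¹ * ∫⁻ z in S, trapezoid A B z := by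
  rw [uniformIoo, uniformIoo, Measure.prod_smul_left, Measure.prod_smul_right, smul_smul,
    Measure.smul_apply, volume_restrict_prod_add_preimage A B hS, smul_eq_mul,
    ENNReal.ofReal_mul hA, ENNReal.mul_inv (by simp) (by simp)]

lemma setLIntegral_Ioi_le_of_crossing {α : Type*} [LinearOrder α] [TopologicalSpace α]
    [ClosedIicTopology α] [MeasurableSpace α] [OpensMeasurableSpace α] {μ : Measure α}
    {f g : α → ℝ≥0∞} (hfg : ∫⁻ x, f x ∂μ = ∫⁻ x, g x ∂μ) (hg : ∫⁻ x, g x ∂μ ≠ ∞) {c : α}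
    (hle : ∀ x ≤ c, g x ≤ f x) (hge : ∀ x, c ≤ x → f x ≤ g x) (T : α) :
    ∫⁻ x in Ioi T, f x ∂μ ≤ ∫⁻ x in Ioi T, g x ∂μ := by
  rcases le_total c T with hcT | hTc
  · exact setLIntegral_mono' measurableSet_Ioi fun x hx => hge x (hcT.trans (le_of_lt hx))
  have hIic : ∫⁻ x in Iic T, g x ∂μ ≤ ∫⁻ x in Iic T, f x ∂μ :=
    setLIntegral_mono' measurableSet_Iic fun x hx => hle x (le_trans hx hTc)
  have hfin : ∫⁻ x in Iic T, g x ∂μ ≠ ∞ := ne_top_of_le_ne_top hg (setLIntegral_le_lintegral _ _)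
  refine (ENNReal.add_le_add_iff_left hfin).1 ?_
  calc ∫⁻ x in Iic T, g x ∂μ + ∫⁻ x in Ioi T, f x ∂μ
      ≤ ∫⁻ x in Iic T, f x ∂μ + ∫⁻ x in Ioi T, f x ∂μ := by gcongr
    _ = ∫⁻ x in Iic T, g x ∂μ + ∫⁻ x in Ioi T, g x ∂μ := by
      rw [← compl_Iic, lintegral_add_compl _ measurableSet_Iic,
        lintegral_add_compl _ measurableSet_Iic, hfg]

lemma trapezoid_le_trapezoid_of_le {A₁ B₁ A₂ B₂ z : ℝ} (h₂₁ : A₂ ≤ A₁) (h₁ : A₁ ≤ B₁)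
    (hz : z ≤ A₁ + B₁ - A₂) : trapezoid A₂ B₂ z ≤ trapezoid A₁ B₁ z := by
  rw [trapezoid_eq, trapezoid_eq]
  refine ENNReal.ofReal_le_ofReal (le_min (le_min ?_ ?_) (le_min ?_ ?_)) <;>
    simp only [min_le_iff] <;> grind

lemma trapezoid_le_trapezoid_of_ge {A₁ B₁ A₂ B₂ z : ℝ} (h₁ : A₁ ≤ B₁) (h₁₂ : B₁ ≤ B₂)
    (hsum : A₁ + B₁ ≤ A₂ + B₂) (hz : A₁ + B₁ - A₂ ≤ z) : trapezoid A₁ B₁ z ≤ trapezoid A₂ B₂ z := by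
  rw [trapezoid_eq, trapezoid_eq]
  refine ENNReal.ofReal_le_ofReal (le_min (le_min ?_ ?_) (le_min ?_ ?_)) <;>
    simp only [min_le_iff] <;> grind

lemma uniformIoo_prod_add_gt_le {A₁ B₁ A₂ B₂ : ℝ} (hA₂ : 0 < A₂) (h₂₁ : A₂ ≤ A₁) (h₁ : A₁ ≤ B₁)
    (h₁₂ : B₁ ≤ B₂) (hprod : A₁ * B₁ = A₂ * B₂) (T : ℝ) :
    ((uniformIoo A₁).prod (uniformIoo B₁)) {x | T < x.1 + x.2}
      ≤ ((uniformIoo A₂).prod (uniformIoo B₂)) {x | T < x.1 + x.2} := by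
  have hsum : A₁ + B₁ ≤ A₂ + B₂ := by
    nlinarith [mul_nonneg (sub_nonneg.2 h₂₁) (sub_nonneg.2 (h₂₁.trans h₁))]
  have hmass : ∫⁻ z, trapezoid A₁ B₁ z = ∫⁻ z, trapezoid A₂ B₂ z := by
    rw [lintegral_trapezoid (by linarith), lintegral_trapezoid hA₂.le, hprod]
  have hcross := setLIntegral_Ioi_le_of_crossing hmass
    (by simp [lintegral_trapezoid hA₂.le]) (c := A₁ + B₁ - A₂)
    (fun z hz => trapezoid_le_trapezoid_of_le h₂₁ h₁ hz)
    (fun z hz => trapezoid_le_trapezoid_of_ge h₁ h₁₂ hsum hz) T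
  have hset : {x : ℝ × ℝ | T < x.1 + x.2} = (fun x => x.1 + x.2) ⁻¹' Ioi T := rfl
  rw [hset, uniformIoo_prod_add_preimage (by linarith) _ measurableSet_Ioi,
    uniformIoo_prod_add_preimage hA₂.le _ measurableSet_Ioi, hprod]
  gcongr

lemma uniformIoo_prod_mul_add_mul_gt {p q : ℝ} (hp : 0 < p) (hq : 0 < q) (s T : ℝ) :
    ((uniformIoo s).prod (uniformIoo s)) {x | T < p * x.1 + q * x.2}
      = ((uniformIoo (p * s)).prod (uniformIoo (q * s))) {x | T < x.1 + x.2} := by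
  rw [← map_const_mul_uniformIoo hp, ← map_const_mul_uniformIoo hq,
    Measure.map_prod_map _ _ (measurable_const_mul p) (measurable_const_mul q),
    Measure.map_apply (by fun_prop) (measurableSet_lt measurable_const (by fun_prop))]
  rfl

section WeightedSum

variable {ι : Type*} [Fintype ι] [DecidableEq ι]

lemma sum_mul_update_update (c x : ι → ℝ) {i j : ι} (hij : i ≠ j) (u v : ℝ) :
    ∑ k, c k * update (update x i u) j v k
      = c i * u + c j * v + ∑ k, c k * update (update x i 0) j 0 k := by
  rw [← sub_eq_iff_eq_add, ← Finset.sum_sub_distrib, Fintype.sum_eq_add i j hij]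
  · simp [hij]
  · rintro k ⟨hki, hkj⟩
    simp [hki, hkj]

lemma lintegral_lintegral_indicator_weightedSum_gt (ν : Measure ℝ) [SFinite ν] (c x : ι → ℝ)
    {i j : ι} (hij : i ≠ j) (t : ℝ) :
    ∫⁻ u, ∫⁻ v, {y : ι → ℝ | t < ∑ k, c k * y k}.indicator 1 (update (update x i u) j v) ∂ν ∂ν
      = (ν.prod ν) {p | t - ∑ k, c k * update (update x i 0) j 0 k < c i * p.1 + c j * p.2} := by
  set S := {p : ℝ × ℝ | t - ∑ k, c k * update (update x i 0) j 0 k < c i * p.1 + c j * p.2}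
  have hS : MeasurableSet S := measurableSet_lt measurable_const (by fun_prop)
  have hsec (u v : ℝ) : {y : ι → ℝ | t < ∑ k, c k * y k}.indicator 1 (update (update x i u) j v)
      = S.indicator (1 : ℝ × ℝ → ℝ≥0∞) (u, v) := by
    have hmem : update (update x i u) j v ∈ {y : ι → ℝ | t < ∑ k, c k * y k} ↔ (u, v) ∈ S := by
      change t < _ ↔ t - _ < c i * u + c j * v
      rw [sum_mul_update_update c x hij]
      constructor <;> intro h <;> linarith
    by_cases h : (u, v) ∈ S
    · rw [indicator_of_mem (hmem.2 h), indicator_of_mem h, Pi.one_apply, Pi.one_apply]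
    · rw [indicator_of_notMem (mt hmem.1 h), indicator_of_notMem h]
  simp_rw [hsec]
  rw [← lintegral_indicator_one hS, lintegral_prod _ (measurable_one.indicator hS).aemeasurable]

lemma measure_pi_weightedSum_gt_le (ν : Measure ℝ) [SigmaFinite ν] {c c' : ι → ℝ} {i j : ι}
    (hij : i ≠ j) (hc : ∀ k, k ≠ i → k ≠ j → c k = c' k)
    (hpair : ∀ T, (ν.prod ν) {x | T < c i * x.1 + c j * x.2}
      ≤ (ν.prod ν) {x | T < c' i * x.1 + c' j * x.2}) (t : ℝ) :
    Measure.pi (fun _ : ι => ν) {y | t < ∑ k, c k * y k}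
      ≤ Measure.pi (fun _ : ι => ν) {y | t < ∑ k, c' k * y k} := by
  have hmeas (c : ι → ℝ) : MeasurableSet {y : ι → ℝ | t < ∑ k, c k * y k} :=
    measurableSet_lt measurable_const (by fun_prop)
  rw [← lintegral_indicator_one (hmeas c), ← lintegral_indicator_one (hmeas c')]
  refine lintegral_le_of_lmarginal_le {i, j} (measurable_one.indicator (hmeas c))
    (measurable_one.indicator (hmeas c')) fun x => ?_
  have hrest :
      ∑ k, c k * update (update x i 0) j 0 k = ∑ k, c' k * update (update x i 0) j 0 k := by
    refine Finset.sum_congr rfl fun k _ => ?_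
    by_cases hki : k = i
    · simp [hki, hij]
    by_cases hkj : k = j
    · simp [hkj]
    rw [hc k hki hkj]
  have hi : i ∉ ({j} : Finset ι) := Finset.notMem_singleton.2 hij
  rw [lmarginal_insert _ (measurable_one.indicator (hmeas c)) hi,
    lmarginal_insert _ (measurable_one.indicator (hmeas c')) hi]
  simp only [lmarginal_singleton]
  rw [lintegral_lintegral_indicator_weightedSum_gt ν _ x hij,
    lintegral_lintegral_indicator_weightedSum_gt ν _ x hij, hrest]
  exact hpair _

end WeightedSum

lemma measure_pi_weightedSum_gt_comp_perm {ι : Type*} [Fintype ι] (ν : Measure ℝ) [SigmaFinite ν]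
    (c : ι → ℝ) (σ : Equiv.Perm ι) (t : ℝ) :
    Measure.pi (fun _ : ι => ν) {y | t < ∑ k, (c ∘ σ) k * y k}
      = Measure.pi (fun _ : ι => ν) {y | t < ∑ k, c k * y k} := by
  have hpre : MeasurableEquiv.piCongrLeft (fun _ => ℝ) σ ⁻¹' {y | t < ∑ k, c k * y k}
      = {y | t < ∑ k, (c ∘ σ) k * y k} := by
    ext y
    simp only [mem_preimage, mem_ofPred_eq, MeasurableEquiv.coe_piCongrLeft,
      Equiv.piCongrLeft_apply_eq_cast, cast_eq, comp_apply]
    rw [← Equiv.sum_comp σ]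
    simp
  rw [← hpre, (measurePreserving_piCongrLeft (fun _ => ν) σ).measure_preimage
    (measurableSet_lt measurable_const (by fun_prop)).nullMeasurableSet]

lemma sum_add_single_sub_single {ι : Type*} [DecidableEq ι] (v : ι → ℝ) (j k : ι) (δ : ℝ)
    (s : Finset ι) :
    ∑ i ∈ s, (v + Pi.single j δ - Pi.single k δ : ι → ℝ) i
      = ∑ i ∈ s, v i + (if j ∈ s then δ else 0) - (if k ∈ s then δ else 0) := by
  simp [Finset.sum_add_distrib, Finset.sum_sub_distrib, Finset.sum_pi_single']

section Majorization

variable {n : ℕ}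

lemma exists_transfer_pair {u v : Fin n → ℝ} (huv : u ≠ v) (hsum : ∑ i, u i = ∑ i, v i)
    (htail : ∀ m, ∑ i ∈ Finset.Ici m, u i ≤ ∑ i ∈ Finset.Ici m, v i) :
    ∃ j k, j < k ∧ v j < u j ∧ u k < v k ∧ ∀ i, j < i → u i ≤ v i := by
  have hne : (Finset.univ.filter fun i => v i < u i).Nonempty := by
    by_contra! h
    simp only [Finset.filter_eq_empty_iff, Finset.mem_univ, not_lt, true_implies] at h
    exact huv (funext fun i =>
      (Finset.sum_eq_sum_iff_of_le fun i _ => @h i).1 hsum i (Finset.mem_univ i))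
  set j := (Finset.univ.filter fun i => v i < u i).max' hne
  have hj : v j < u j := by simpa using Finset.max'_mem _ hne
  have hafter (i : Fin n) (hi : j < i) : u i ≤ v i :=
    not_lt.1 fun h => (Finset.le_max' _ i (by simpa using h)).not_gt hi
  obtain ⟨k, hjk, hk⟩ : ∃ k, j < k ∧ u k < v k := by
    by_contra! h
    refine (htail j).not_gt (Finset.sum_lt_sum (fun i hi => ?_) ⟨j, by simp, hj⟩)
    rcases (Finset.mem_Ici.1 hi).eq_or_lt with rfl | hji
    · exact hj.le
    · exact h i hji
  exact ⟨j, k, hjk, hj, hk, hafter⟩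

variable {α : Type*} [Preorder α] {G : (Fin n → ℝ) → α}

lemma le_of_forall_sum_Ici_le
    (htransfer : ∀ w i j δ, i ≠ j → 0 ≤ δ → w i + δ ≤ w j - δ →
      G (w + Pi.single i δ - Pi.single j δ) ≤ G w)
    {u : Fin n → ℝ} (hu : Monotone u) {v : Fin n → ℝ} (hsum : ∑ i, u i = ∑ i, v i)
    (htail : ∀ m, ∑ i ∈ Finset.Ici m, u i ≤ ∑ i ∈ Finset.Ici m, v i) : G u ≤ G v := by
  induction hN : #{i | u i ≠ v i} using Nat.strong_induction_on generalizing v with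
  | _ N ih =>
  by_cases huv : u = v
  · rw [huv]
  obtain ⟨j, k, hjk, hj, hk, hafter⟩ := exists_transfer_pair huv hsum htail
  -- Moving `δ` from `v k` to `v j` keeps the tail-sum inequalities and makes `v` agree with `u`
  -- at `j` or at `k`.
  set δ := min (u j - v j) (v k - u k)
  have hδ : 0 < δ := lt_min (sub_pos.2 hj) (sub_pos.2 hk)
  have hδj : v j + δ ≤ u j := by linarith [min_le_left (u j - v j) (v k - u k)]
  have hδk : u k ≤ v k - δ := by linarith [min_le_right (u j - v j) (v k - u k)]
  set v' : Fin n → ℝ := v + Pi.single j δ - Pi.single k δ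
  have hv'j : v' j = v j + δ := by simp [v', hjk.ne]
  have hv'k : v' k = v k - δ := by simp [v', hjk.ne']
  have hv' (i : Fin n) (hij : i ≠ j) (hik : i ≠ k) : v' i = v i := by simp [v', hij, hik]
  have hsum' : ∑ i, u i = ∑ i, v' i := by
    simp only [v', sum_add_single_sub_single, hsum, Finset.mem_univ, if_true, add_sub_cancel_right]
  have htail' (m : Fin n) : ∑ i ∈ Finset.Ici m, u i ≤ ∑ i ∈ Finset.Ici m, v' i := by
    simp only [v', sum_add_single_sub_single, Finset.mem_Ici]
    by_cases hmj : m ≤ j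
    · simp only [hmj, hmj.trans hjk.le, if_true]
      linarith [htail m]
    by_cases hmk : m ≤ k
    · have hgap : v k - u k ≤ ∑ i ∈ Finset.Ici m, (v i - u i) :=
        Finset.single_le_sum (fun i hi => sub_nonneg.2 (hafter i ((not_le.1 hmj).trans_le
          (Finset.mem_Ici.1 hi)))) (Finset.mem_Ici.2 hmk)
      simp only [hmj, hmk, if_true, if_false, Finset.sum_sub_distrib] at hgap ⊢
      linarith [min_le_right (u j - v j) (v k - u k)]
    · simp only [hmj, hmk, if_false]
      linarith [htail m]
  have hcard : #{i | u i ≠ v' i} < #{i | u i ≠ v i} := by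
    refine Finset.card_lt_card ((Finset.ssubset_iff_of_subset fun i hi => ?_).2 ?_)
    · simp only [Finset.mem_filter, Finset.mem_univ, true_and] at hi ⊢
      by_cases hij : i = j
      · exact hij ▸ hj.ne'
      by_cases hik : i = k
      · exact hik ▸ hk.ne
      rwa [← hv' i hij hik]
    · rcases min_choice (u j - v j) (v k - u k) with h | h
      · exact ⟨j, by simp [hj.ne'], by simp [hv'j, δ, h]⟩
      · exact ⟨k, by simp [hk.ne], by simp [hv'k, δ, h]⟩
  calc G u ≤ G v' := ih _ (hN ▸ hcard) hsum' htail' rfl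
    _ ≤ G v := htransfer v j k δ hjk.ne hδ.le (hδj.trans ((hu hjk.le).trans hδk))

theorem le_of_isMajorizedBy (hperm : ∀ w (σ : Equiv.Perm (Fin n)), G (w ∘ σ) = G w)
    (htransfer : ∀ w i j δ, i ≠ j → 0 ≤ δ → w i + δ ≤ w j - δ →
      G (w + Pi.single i δ - Pi.single j δ) ≤ G w)
    {u v : Fin n → ℝ} (h : IsMajorizedBy u v) : G u ≤ G v := by
  rw [← hperm u (Tuple.sort u), ← hperm v (Tuple.sort v)]
  exact le_of_forall_sum_Ici_le htransfer (Tuple.monotone_sort u)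
    (by simpa only [comp_apply, Equiv.sum_comp] using h.1) h.2

end Majorization

lemma measure_pi_uniformIoo_transfer_le {ι : Type*} [Fintype ι] [DecidableEq ι] {s : ℝ}
    (hs : 0 < s) (t : ℝ) (w : ι → ℝ) {i j : ι} (hij : i ≠ j) {δ : ℝ} (hδ : 0 ≤ δ)
    (hclose : w i + δ ≤ w j - δ) :
    Measure.pi (fun _ : ι => uniformIoo s)
        {y | t < ∑ k, Real.exp ((w + Pi.single i δ - Pi.single j δ : ι → ℝ) k) * y k}
      ≤ Measure.pi (fun _ : ι => uniformIoo s) {y | t < ∑ k, Real.exp (w k) * y k} := by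
  refine measure_pi_weightedSum_gt_le _ hij (fun k hki hkj => by simp [hki, hkj]) (fun T => ?_) t
  simp only [Pi.sub_apply, Pi.add_apply, Pi.single_eq_same, Pi.single_eq_of_ne hij,
    Pi.single_eq_of_ne hij.symm, add_zero, sub_zero]
  rw [uniformIoo_prod_mul_add_mul_gt (Real.exp_pos _) (Real.exp_pos _),
    uniformIoo_prod_mul_add_mul_gt (Real.exp_pos _) (Real.exp_pos _)]
  refine uniformIoo_prod_add_gt_le (by positivity) ?_ ?_ ?_ ?_ T
  · gcongr; linarith
  · gcongr
  · gcongr; linarith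
  · have hprod : Real.exp (w i + δ) * Real.exp (w j - δ) = Real.exp (w i) * Real.exp (w j) := by
      rw [← Real.exp_add, ← Real.exp_add]
      ring_nf
    linear_combination s ^ 2 * hprod

theorem uniform_weighted_sums_st_order_general
    {Ω : Type*} [MeasurableSpace Ω] (P : Measure Ω)
    (n : ℕ) (Y : Fin n → Ω → ℝ) (s : ℝ) (hs : 0 < s)
    (hY_meas : ∀ i, Measurable (Y i))
    (h_indep : iIndepFun Y P)
    (h_law : ∀ i, P.map (Y i) = (ENNReal.ofReal s)⁻¹ • volume.restrict (Set.Ioo 0 s))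
    (a b : Fin n → ℝ) (ha : ∀ i, 0 < a i) (hb : ∀ i, 0 < b i)
    (hmaj : IsMajorizedBy (fun i => Real.log (a i)) (fun i => Real.log (b i))) :
    ∀ t : ℝ, P {ω | t < ∑ i, a i * Y i ω} ≤ P {ω | t < ∑ i, b i * Y i ω} := by
  intro t
  have hjoint : P.map (fun ω i => Y i ω) = Measure.pi fun _ => uniformIoo s := by
    rw [h_indep.map_fun_eq_pi_map fun i => (hY_meas i).aemeasurable]
    simp only [h_law, uniformIoo]
  have hlaw (c : Fin n → ℝ) : P {ω | t < ∑ i, c i * Y i ω}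
      = Measure.pi (fun _ => uniformIoo s) {y | t < ∑ i, c i * y i} := by
    rw [← hjoint, Measure.map_apply (measurable_pi_lambda _ hY_meas)
      (measurableSet_lt measurable_const (by fun_prop))]
    rfl
  have hexp := le_of_isMajorizedBy
    (G := fun w => Measure.pi (fun _ => uniformIoo s) {y | t < ∑ i, Real.exp (w i) * y i})
    (fun w σ => measure_pi_weightedSum_gt_comp_perm _ (Real.exp ∘ w) σ t)
    (fun w i j δ hij hδ hclose => measure_pi_uniformIoo_transfer_le hs t w hij hδ hclose) hmaj
  simpa only [hlaw, Real.exp_log, ha, hb] using hexp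

theorem uniform_weighted_sums_st_order
    {Ω : Type*} [MeasurableSpace Ω] (P : Measure Ω) [IsProbabilityMeasure P]
    (n : ℕ) (Y : Fin n → Ω → ℝ) (s : ℝ) (hs : 0 < s)
    (hY_meas : ∀ i, Measurable (Y i))
    (h_indep : iIndepFun Y P)
    (h_law : ∀ i, P.map (Y i) = (ENNReal.ofReal s)⁻¹ • volume.restrict (Set.Ioo 0 s))
    (a b : Fin n → ℝ) (ha : ∀ i, 0 < a i) (hb : ∀ i, 0 < b i)
    (hmaj : IsMajorizedBy (fun i => Real.log (a i)) (fun i => Real.log (b i))) :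
    ∀ t : ℝ, P {ω | t < ∑ i, a i * Y i ω} ≤ P {ω | t < ∑ i, b i * Y i ω} :=
  uniform_weighted_sums_st_order_general P n Y s hs hY_meas h_indep h_law a b ha hb hmaj
end

section
/- Fix p > 1, q with 1/p + 1/q = 1, t > 0, and β ∈ [1/2, 1). Set y_0 = t(1−β)^{1/p}, y_1 = t(1−β)^{−1/q}, and x(y) = (β^{−1} − 1)^{1/q}(y_1 − y). For y ∈ (0, y_0), let ỹ ∈ (y_0, y_1) be the unique point with y^p + x(y)^p = ỹ^p + x(ỹ)^p. Then β·ỹ ≥ (1−β)(y_1 − y) and β·y ≤ (1−β)(y_1 − ỹ). -/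
/-! With `r = β / (1 - β) ≥ 1` one has `x(z) ^ p = (y₁ - z) ^ p / r ^ (p - 1)` and
`y₁ = (1 + r) y₀`, and `L(z) = z ^ p + x(z) ^ p` is strictly increasing on `[y₀, y₁]`, its derivative having the sign
of `z - (y₁ - z) / r`. The two inequalities say that `ỹ` lies between `s₁ = (y₁ - y) / r` and
`s₂ = y₁ - r y`, both in `[y₀, y₁]`, so it suffices that `L(s₁) ≤ L(y) ≤ L(s₂)`. After clearing
powers of `r`, each of these is the convexity inequality
`((a + (r - 1) b) / r) ^ p ≤ (a ^ p + (r - 1) b ^ p) / r`, with `(a, b) = (r y, y₁ - y)` and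
`(y₁ - r y, y)` respectively. -/

open Real Set

theorem add_sub_one_mul_rpow_le {p u a b : ℝ} (hp : 1 ≤ p) (hu : 1 ≤ u) (ha : 0 ≤ a) (hb : 0 ≤ b) :
    (a + (u - 1) * b) ^ p ≤ u ^ (p - 1) * (a ^ p + (u - 1) * b ^ p) := by
  have hu0 : 0 < u := by linarith
  have jensen := (convexOn_rpow hp).2 (mem_Ici.2 ha) (mem_Ici.2 hb)
    (by positivity : 0 ≤ 1 / u) (div_nonneg (sub_nonneg.2 hu) hu0.le)
    (by field_simp; ring : 1 / u + (u - 1) / u = 1)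
  simp only [smul_eq_mul] at jensen
  have hmean : 1 / u * a + (u - 1) / u * b = (a + (u - 1) * b) / u := by field_simp
  have hscale : u ^ p = u ^ (p - 1) * u := by
    rw [← rpow_add_one hu0.ne', sub_add_cancel]
  rw [hmean, div_rpow (by positivity) hu0.le, div_le_iff₀ (by positivity), hscale] at jensen
  calc (a + (u - 1) * b) ^ p ≤ (1 / u * a ^ p + (u - 1) / u * b ^ p) * (u ^ (p - 1) * u) := jensen
    _ = u ^ (p - 1) * (a ^ p + (u - 1) * b ^ p) := by field_simp

/-- The paper's `L(z) = z ^ p + x(z) ^ p`, with `Y = y₁` and `r = β / (1 - β)`. -/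
noncomputable def powerBalance (p r Y z : ℝ) : ℝ := z ^ p + (Y - z) ^ p / r ^ (p - 1)

section powerBalance

variable {p r Y : ℝ}

theorem hasDerivAt_powerBalance (hp : 1 ≤ p) (z : ℝ) :
    HasDerivAt (powerBalance p r Y) (p * z ^ (p - 1) - p * (Y - z) ^ (p - 1) / r ^ (p - 1)) z := by
  have hY : HasDerivAt (fun w => (Y - w) ^ p) (-1 * p * (Y - z) ^ (p - 1)) z := by
    simpa using ((hasDerivAt_id z).const_sub Y).rpow_const (p := p) (Or.inr hp)
  exact ((hasDerivAt_rpow_const (Or.inr hp)).add (hY.div_const (r ^ (p - 1)))).congr_deriv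
    (by ring)

theorem powerBalance_strictMonoOn (hp : 1 < p) (hr : 0 < r) {c : ℝ} (hc : Y ≤ (1 + r) * c) :
    StrictMonoOn (powerBalance p r Y) (Icc c Y) := by
  have hdiff := fun z => hasDerivAt_powerBalance (r := r) (Y := Y) hp.le z
  refine strictMonoOn_of_deriv_pos (convex_Icc c Y)
    (HasDerivAt.continuousOn fun z _ => hdiff z) fun z hz => ?_
  rw [interior_Icc] at hz
  have hdual : (Y - z) / r < z := by
    rw [div_lt_iff₀ hr]; nlinarith [hz.1]
  have hYz : 0 ≤ (Y - z) / r := div_nonneg (by linarith [hz.2]) hr.le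
  have hpow := rpow_lt_rpow hYz hdual (by linarith : 0 < p - 1)
  rw [div_rpow (by linarith [hz.2]) hr.le] at hpow
  rw [(hdiff z).deriv, mul_div_assoc, ← mul_sub]
  exact mul_pos (by linarith) (sub_pos.2 hpow)

theorem powerBalance_le_sub_mul (hp : 1 ≤ p) (hr : 1 ≤ r) {y : ℝ} (hy : 0 ≤ y) (hyY : r * y ≤ Y) :
    powerBalance p r Y y ≤ powerBalance p r Y (Y - r * y) := by
  have jensen := add_sub_one_mul_rpow_le hp hr (sub_nonneg.2 hyY) hy
  have hR : 0 < r ^ (p - 1) := by positivity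
  have hrp : (r * y) ^ p = r ^ (p - 1) * r * y ^ p := by
    rw [mul_rpow (by linarith) hy, ← rpow_add_one (by positivity), sub_add_cancel]
  rw [show Y - r * y + (r - 1) * y = Y - y by ring] at jensen
  have hdiv : (Y - y) ^ p / r ^ (p - 1) ≤ (Y - r * y) ^ p + (r - 1) * y ^ p :=
    (div_le_iff₀' hR).2 jensen
  calc powerBalance p r Y y ≤ y ^ p + ((Y - r * y) ^ p + (r - 1) * y ^ p) := by
        unfold powerBalance; gcongr
    _ = powerBalance p r Y (Y - r * y) := by
        unfold powerBalance; rw [sub_sub_cancel, hrp]; field_simp; ring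

theorem powerBalance_div_le (hp : 1 ≤ p) (hr : 1 ≤ r) {y : ℝ} (hy : 0 ≤ y) (hyY : y ≤ Y) :
    powerBalance p r Y ((Y - y) / r) ≤ powerBalance p r Y y := by
  have hr0 : 0 < r := by linarith
  unfold powerBalance
  set R := r ^ (p - 1)
  have hR : 0 < R := rpow_pos_of_pos hr0 _
  have hrp : r ^ p = r * R := by rw [← rpow_one_add' hr0.le (by linarith), add_sub_cancel]
  have jensen := add_sub_one_mul_rpow_le hp hr (by positivity : 0 ≤ r * y) (sub_nonneg.2 hyY)
  rw [mul_rpow hr0.le hy, hrp] at jensen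
  have hsub : Y - (Y - y) / r = (r * y + (r - 1) * (Y - y)) / r := by field_simp; ring
  rw [hsub, div_rpow (sub_nonneg.2 hyY) hr0.le, div_rpow (by nlinarith) hr0.le, hrp]
  calc (Y - y) ^ p / (r * R) + (r * y + (r - 1) * (Y - y)) ^ p / (r * R) / R
      ≤ (Y - y) ^ p / (r * R) + R * (r * R * y ^ p + (r - 1) * (Y - y) ^ p) / (r * R) / R := by
        gcongr
    _ = y ^ p + (Y - y) ^ p / R := by field_simp; ring

theorem powerBalance_partner_mem_Icc (hp : 1 < p) (hr : 1 ≤ r) {c y z : ℝ} (hY : Y = (1 + r) * c)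
    (hy : y ∈ Ioo 0 c) (hz : z ∈ Icc c Y) (hL : powerBalance p r Y y = powerBalance p r Y z) :
    z ∈ Icc ((Y - y) / r) (Y - r * y) := by
  obtain ⟨hy_pos, hy_lt⟩ := hy
  have hr0 : 0 < r := by linarith
  have hY0 : 0 ≤ Y := by rw [hY]; nlinarith
  have hmono := powerBalance_strictMonoOn hp hr0 hY.le
  constructor
  · refine (hmono.le_iff_le ⟨?_, ?_⟩ hz).1
      (hL ▸ powerBalance_div_le hp.le hr hy_pos.le (by nlinarith))
    · rw [le_div_iff₀ hr0]; nlinarith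
    · rw [div_le_iff₀ hr0]; nlinarith
  · refine (hmono.le_iff_le hz ⟨?_, ?_⟩).1
      (hL ▸ powerBalance_le_sub_mul hp.le hr hy_pos.le (by nlinarith))
    · nlinarith
    · nlinarith

end powerBalance

theorem inv_sub_one_rpow_mul_rpow {p q β w : ℝ} (hp : p ≠ 0) (hpq : 1 / p + 1 / q = 1) (hβ0 : 0 < β)
    (hβ1 : β < 1) (hw : 0 ≤ w) :
    ((β⁻¹ - 1) ^ (1 / q) * w) ^ p = w ^ p / (β / (1 - β)) ^ (p - 1) := by
  have hinv : β⁻¹ - 1 = (β / (1 - β))⁻¹ := by field_simp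
  have hexp : 1 / q * p = p - 1 := by
    rw [show 1 / q = 1 - 1 / p by linarith]; field_simp
  have h1β : 0 < 1 - β := by linarith
  have hβr : 0 ≤ (β / (1 - β))⁻¹ := by positivity
  rw [mul_rpow (by rw [hinv]; positivity) hw, hinv, ← rpow_mul hβr, hexp,
    inv_rpow (inv_nonneg.1 hβr), inv_mul_eq_div]

theorem claim3_inequalities_general
    (p q t β : ℝ) (hp : 1 < p) (hpq : 1 / p + 1 / q = 1)
    (hβ : β ∈ Set.Ico (1 / 2 : ℝ) 1)
    (y₀ y₁ : ℝ) (hy₀ : y₀ = t * (1 - β) ^ (1 / p)) (hy₁ : y₁ = t * (1 - β) ^ (-(1 / q)))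
    (x : ℝ → ℝ) (hx : ∀ z, x z = (β⁻¹ - 1) ^ (1 / q) * (y₁ - z))
    (y ty : ℝ) (hy : y ∈ Set.Ioo (0 : ℝ) y₀) (hty : ty ∈ Set.Ioo y₀ y₁)
    (heq : y ^ p + x y ^ p = ty ^ p + x ty ^ p) :
    (1 - β) * (y₁ - y) ≤ β * ty ∧ β * y ≤ (1 - β) * (y₁ - ty) := by
  obtain ⟨hβ_half, hβ_one⟩ := hβ
  obtain ⟨hy_pos, hy_lt⟩ := hy
  obtain ⟨hty_gt, hty_lt⟩ := hty
  have h1β : 0 < 1 - β := by linarith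
  set r := β / (1 - β) with hr_def
  have hr : 1 ≤ r := (one_le_div h1β).2 (by linarith)
  have hrβ : (1 - β) * r = β := by rw [hr_def]; field_simp
  have hy₀₁ : y₀ = (1 - β) * y₁ := by
    rw [hy₀, hy₁, mul_left_comm, ← rpow_one_add' h1β.le (by
      rw [show 1 + -(1 / q) = 1 / p by linarith]; positivity)]
    congr 2; linarith
  have hy₁r : y₁ = (1 + r) * y₀ := by rw [hy₀₁, hr_def]; field_simp; ring
  have hL : powerBalance p r y₁ y = powerBalance p r y₁ ty := by
    rw [hx, hx, inv_sub_one_rpow_mul_rpow (by linarith) hpq (by linarith) hβ_one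
      (sub_nonneg.2 (by linarith : y ≤ y₁)), inv_sub_one_rpow_mul_rpow (by linarith) hpq
      (by linarith) hβ_one (sub_nonneg.2 hty_lt.le)] at heq
    exact heq
  obtain ⟨hs₁, hs₂⟩ := powerBalance_partner_mem_Icc hp hr hy₁r ⟨hy_pos, hy_lt⟩
    ⟨hty_gt.le, hty_lt.le⟩ hL
  rw [div_le_iff₀ (by linarith)] at hs₁
  constructor
  · calc (1 - β) * (y₁ - y) ≤ (1 - β) * (r * ty) := by gcongr; linarith
      _ = β * ty := by rw [← mul_assoc, hrβ]
  · calc β * y = (1 - β) * (r * y) := by rw [← mul_assoc, hrβ]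
      _ ≤ (1 - β) * (y₁ - ty) := by gcongr; linarith

theorem claim3_inequalities
    (p q t β : ℝ) (hp : 1 < p) (hpq : 1 / p + 1 / q = 1) (ht : 0 < t)
    (hβ : β ∈ Set.Ico (1 / 2 : ℝ) 1)
    (y₀ y₁ : ℝ) (hy₀ : y₀ = t * (1 - β) ^ (1 / p)) (hy₁ : y₁ = t * (1 - β) ^ (-(1 / q)))
    (x : ℝ → ℝ) (hx : ∀ z, x z = (β⁻¹ - 1) ^ (1 / q) * (y₁ - z))
    (y ty : ℝ) (hy : y ∈ Set.Ioo (0 : ℝ) y₀) (hty : ty ∈ Set.Ioo y₀ y₁)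
    (heq : y ^ p + x y ^ p = ty ^ p + x ty ^ p) :
    (1 - β) * (y₁ - y) ≤ β * ty ∧ β * y ≤ (1 - β) * (y₁ - ty) :=
  claim3_inequalities_general p q t β hp hpq hβ y₀ y₁ hy₀ hy₁ x hx y ty hy hty heq
end

section
/- Fix p > 1, q with 1/p + 1/q = 1, t > 0, and β ∈ [1/2, 1). Set y_0 = t(1−β)^{1/p}, y_1 = t(1−β)^{−1/q}, and x(y) = (β^{−1} − 1)^{1/q}(y_1 − y). For y ∈ (0, y_0), let ỹ ∈ (y_0, y_1) be the unique point with y^p + x(y)^p = ỹ^p + x(ỹ)^p, and let δ = min{0, 2 − p}. Then the derivative of the map y ↦ ỹ satisfies |dỹ/dy| ≥ (x(ỹ)·ỹ / (x(y)·y))^δ · (y_0 − y)/(ỹ − y_0), where dỹ/dy = ((βy)^{p/q} − ((1−β)(y_1−y))^{p/q}) / ((βỹ)^{p/q} − ((1−β)(y_1−ỹ))^{p/q}). -/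
/-!
Put `a = β⁻¹ - 1` and let the partner of `z` be `σ z = a (y₁ - z)`. Since `p / q = p - 1`,
`x(z)^p = (σ z)^p / a` and `(1 - β)(y₁ - z) = β σ z`, so the hypothesis says that the strictly
convex energy `E z = z^p + (σ z)^p / a` takes the same value at `y` and `ỹ`, while `|dỹ/dy|`
equals `((σ y)^(p-1) - y^(p-1)) / (ỹ^(p-1) - (σ ỹ)^(p-1))`. Because `σ (σ z)` is the convex
combination `a z + (1 - a) σ z`, Jensen gives `E (σ z) ≤ E z`; strict convexity of `E` then
forces `y ≤ σ ỹ < ỹ` and `y < σ y ≤ ỹ`. As `y₀ - y` and `ỹ - y₀` are proportional to `σ y - y`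
and `ỹ - σ ỹ`, the claim compares secant slopes of `z ↦ z^(p-1)` over two intervals with ordered
endpoints: for `p ≤ 2` this is concavity, for `p ≥ 2` it is convexity after the substitution
`z ↦ z⁻¹`, which produces the weight `(x(ỹ) ỹ / (x(y) y))^(2-p)`.
-/

open Real Set

lemma ConvexOn.slope_mono_of_le_of_le {s : Set ℝ} {f : ℝ → ℝ} (hf : ConvexOn ℝ s f)
    {a b c d : ℝ} (ha : a ∈ s) (hb : b ∈ s) (hc : c ∈ s) (hd : d ∈ s)
    (hab : a < b) (hcd : c < d) (hac : a ≤ c) (hbd : b ≤ d) :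
    slope f a b ≤ slope f c d :=
  calc slope f a b ≤ slope f a d := by
        simpa only [slope_def_field] using hf.secant_mono ha hb hd hab.ne' (by linarith) hbd
    _ = slope f d a := slope_comm _ _ _
    _ ≤ slope f d c := by
        simpa only [slope_def_field] using hf.secant_mono hd ha hc (by linarith) hcd.ne hac
    _ = slope f c d := slope_comm _ _ _

lemma ConcaveOn.slope_anti_of_le_of_le {s : Set ℝ} {f : ℝ → ℝ} (hf : ConcaveOn ℝ s f)
    {a b c d : ℝ} (ha : a ∈ s) (hb : b ∈ s) (hc : c ∈ s) (hd : d ∈ s)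
    (hab : a < b) (hcd : c < d) (hac : a ≤ c) (hbd : b ≤ d) :
    slope f c d ≤ slope f a b := by
  simpa using hf.neg.slope_mono_of_le_of_le ha hb hc hd hab hcd hac hbd

lemma StrictConvexOn.lt_max_of_lt_of_lt {s : Set ℝ} {f : ℝ → ℝ} (hf : StrictConvexOn ℝ s f)
    {x y z : ℝ} (hx : x ∈ s) (hz : z ∈ s) (hxy : x < y) (hyz : y < z) :
    f y < max (f x) (f z) :=
  hf.lt_on_openSegment hx hz (hxy.trans hyz).ne <| by
    rw [openSegment_eq_Ioo (hxy.trans hyz)]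
    exact ⟨hxy, hyz⟩

lemma slope_rpow_inv (e : ℝ) {u v : ℝ} (hu : 0 < u) (hv : 0 < v) :
    slope (· ^ e) v⁻¹ u⁻¹ = (u * v) ^ (1 - e) * slope (· ^ e) u v := by
  rcases eq_or_ne u v with rfl | huv
  · simp
  have : u⁻¹ - v⁻¹ ≠ 0 := sub_ne_zero.2 (inv_injective.ne huv)
  have : v - u ≠ 0 := sub_ne_zero.2 huv.symm
  simp only [slope_def_field, inv_rpow hu.le, inv_rpow hv.le, mul_rpow hu.le hv.le,
    rpow_sub hu, rpow_sub hv, rpow_one]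
  field_simp

lemma rpow_mul_slope_rpow_le_slope_rpow {p u U v V : ℝ} (hp : 1 < p) (hu : 0 < u) (huv : u ≤ v)
    (hvV : v < V) (huU : u < U) (hUV : U ≤ V) :
    ((v * V) / (U * u)) ^ min 0 (2 - p) * slope (· ^ (p - 1)) v V ≤ slope (· ^ (p - 1)) u U := by
  have hU : 0 < U := hu.trans huU
  have hv : 0 < v := hu.trans_le huv
  have hV : 0 < V := hv.trans hvV
  rcases le_total p 2 with hp2 | hp2
  · rw [min_eq_left (by linarith), rpow_zero, one_mul]
    exact (concaveOn_rpow (by linarith) (by linarith)).slope_anti_of_le_of_le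
      hu.le hU.le hv.le hV.le huU hvV huv hUV
  -- For `p ≥ 2` the power is convex; passing to reciprocals reverses the order of the
  -- endpoints, and `slope_rpow_inv` turns the reciprocal slopes into the weighted ones.
  · rw [min_eq_right (by linarith), show 2 - p = 1 - (p - 1) by ring,
      div_rpow (by positivity) (by positivity), div_mul_eq_mul_div, div_le_iff₀ (by positivity),
      ← slope_rpow_inv _ hv hV, mul_comm U u, mul_comm (slope _ u U), ← slope_rpow_inv _ hu hU]
    exact (convexOn_rpow (by linarith)).slope_mono_of_le_of_le
      (inv_pos.2 hV).le (inv_pos.2 hv).le (inv_pos.2 hU).le (inv_pos.2 hu).le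
      (inv_strictAnti₀ hv hvV) (inv_strictAnti₀ hu huU) (inv_anti₀ hU hUV) (inv_anti₀ hu huv)

lemma rpow_mul_div_le_rpow_sub_div_rpow_sub {p u U v V : ℝ} (hp : 1 < p) (hu : 0 < u) (huv : u ≤ v)
    (hvV : v < V) (huU : u < U) (hUV : U ≤ V) :
    ((v * V) / (U * u)) ^ min 0 (2 - p) * ((U - u) / (V - v)) ≤
      (U ^ (p - 1) - u ^ (p - 1)) / (V ^ (p - 1) - v ^ (p - 1)) := by
  have hslope := rpow_mul_slope_rpow_le_slope_rpow hp hu huv hvV huU hUV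
  have hVv : 0 < V ^ (p - 1) - v ^ (p - 1) :=
    sub_pos.2 (rpow_lt_rpow (hu.le.trans huv) hvV (by linarith))
  rw [slope_def_field, slope_def_field, ← mul_div_assoc, div_le_div_iff₀ (by linarith)
    (by linarith)] at hslope
  rw [← mul_div_assoc, div_le_div_iff₀ (by linarith) hVv]
  linear_combination hslope

def partner (a c z : ℝ) : ℝ := a * (c - z)

noncomputable def energy (p a c z : ℝ) : ℝ := z ^ p + partner a c z ^ p / a

section Energy

variable {p a c : ℝ}

lemma partner_mem_Icc (ha₀ : 0 ≤ a) (ha₁ : a ≤ 1) {z : ℝ} (hz : z ∈ Icc 0 c) :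
    partner a c z ∈ Icc 0 c := by
  unfold partner
  constructor <;> nlinarith [hz.1, hz.2]

lemma partner_sub_self {y₀ : ℝ} (h : a * c = (1 + a) * y₀) (z : ℝ) :
    partner a c z - z = (1 + a) * (y₀ - z) := by
  unfold partner
  linear_combination h

lemma convexOn_partner_rpow (hp : 1 ≤ p) (ha : 0 ≤ a) :
    ConvexOn ℝ (Iic c) (fun z ↦ partner a c z ^ p) := by
  refine ⟨convex_Iic c, fun z₁ hz₁ z₂ hz₂ θ μ hθ hμ hθμ ↦ ?_⟩
  have hnonneg {z : ℝ} (hz : z ∈ Iic c) : 0 ≤ partner a c z :=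
    mul_nonneg ha (sub_nonneg.2 hz)
  have hjensen := (convexOn_rpow hp).2 (hnonneg hz₁) (hnonneg hz₂) hθ hμ hθμ
  simp only [smul_eq_mul] at hjensen ⊢
  convert hjensen using 2
  unfold partner
  linear_combination (-(a * c)) * hθμ

lemma strictConvexOn_energy (hp : 1 < p) (ha : 0 < a) :
    StrictConvexOn ℝ (Icc 0 c) (energy p a c) :=
  ((strictConvexOn_rpow hp).subset Icc_subset_Ici_self (convex_Icc 0 c)).add_convexOn
    (((convexOn_partner_rpow hp.le ha.le).subset Icc_subset_Iic_self (convex_Icc 0 c)).smul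
      (inv_nonneg.2 ha.le) |>.congr fun _ _ ↦ by simp [div_eq_inv_mul])

lemma energy_partner_le (hp : 1 ≤ p) (ha₀ : 0 < a) (ha₁ : a ≤ 1) {z : ℝ} (hz : 0 ≤ z)
    (hσ : 0 ≤ partner a c z) : energy p a c (partner a c z) ≤ energy p a c z := by
  have hpartner : partner a c (partner a c z) = a * z + (1 - a) * partner a c z := by
    unfold partner; ring
  have hjensen := (convexOn_rpow hp).2 hz hσ ha₀.le (sub_nonneg.2 ha₁) (by ring)
  simp only [smul_eq_mul, ← hpartner] at hjensen
  rw [energy, energy, add_div' _ _ _ ha₀.ne', add_div' _ _ _ ha₀.ne',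
    div_le_div_iff_of_pos_right ha₀]
  linarith

lemma le_partner_and_partner_le_of_energy_eq (hp : 1 < p) (ha₀ : 0 < a) (ha₁ : a ≤ 1)
    {y z : ℝ} (hy : 0 ≤ y) (hyz : y < z) (hz : z ≤ c) (h : energy p a c y = energy p a c z) :
    y ≤ partner a c z ∧ partner a c y ≤ z := by
  have hconv := strictConvexOn_energy (c := c) hp ha₀
  have hyI : y ∈ Icc 0 c := ⟨hy, by linarith⟩
  have hzI : z ∈ Icc 0 c := ⟨by linarith, hz⟩
  have hpartner {w : ℝ} (hw : w ∈ Icc 0 c) : energy p a c (partner a c w) ≤ energy p a c w :=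
    energy_partner_le hp.le ha₀ ha₁ hw.1 (partner_mem_Icc ha₀.le ha₁ hw).1
  -- Strictly between a point and its partner the energy is below its value at the point.
  constructor
  · by_contra! hlt
    have := hconv.lt_max_of_lt_of_lt (partner_mem_Icc ha₀.le ha₁ hzI) hzI hlt hyz
    rw [max_eq_right (hpartner hzI)] at this
    linarith
  · by_contra! hlt
    have := hconv.lt_max_of_lt_of_lt hyI (partner_mem_Icc ha₀.le ha₁ hyI) hyz hlt
    rw [max_eq_left (hpartner hyI)] at this
    linarith

lemma secant_ratio_ge_of_energy_eq (hp : 1 < p) (ha₀ : 0 < a) (ha₁ : a ≤ 1) {y₀ y z : ℝ}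
    (hc : a * c = (1 + a) * y₀) (hy : y ∈ Ioo 0 y₀) (hz : z ∈ Ioo y₀ c)
    (h : energy p a c y = energy p a c z) :
    ((partner a c z * z) / (partner a c y * y)) ^ min 0 (2 - p) * ((y₀ - y) / (z - y₀)) ≤
      (partner a c y ^ (p - 1) - y ^ (p - 1)) / (z ^ (p - 1) - partner a c z ^ (p - 1)) := by
  obtain ⟨hy_le, hle_z⟩ := le_partner_and_partner_le_of_energy_eq hp ha₀ ha₁ hy.1.le
    (hy.2.trans hz.1) hz.2.le h
  have hy_lt : y < partner a c y := by nlinarith [partner_sub_self hc y, hy.2]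
  have hlt_z : partner a c z < z := by nlinarith [partner_sub_self hc z, hz.1]
  have hgap : (y₀ - y) / (z - y₀) = (partner a c y - y) / (z - partner a c z) := by
    rw [partner_sub_self hc, ← neg_sub (partner a c z) z, partner_sub_self hc, ← mul_neg,
      neg_sub, mul_div_mul_left _ _ (by positivity)]
  rw [hgap]
  exact rpow_mul_div_le_rpow_sub_div_rpow_sub hp hy.1 hy_le hlt_z hy_lt hle_z

end Energy

lemma inv_sub_one_mem_Ioc {β : ℝ} (hβ : β ∈ Ico (1 / 2 : ℝ) 1) : β⁻¹ - 1 ∈ Ioc 0 1 := by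
  have hβ₀ : 0 < β := by linarith [hβ.1]
  refine ⟨sub_pos.2 ((one_lt_inv₀ hβ₀).2 hβ.2), ?_⟩
  rw [sub_le_iff_le_add, one_add_one_eq_two, inv_le_comm₀ hβ₀ two_pos]
  linarith [hβ.1]

lemma rpow_one_div_mul_rpow {p q a w : ℝ} (hpq : p.HolderConjugate q) (ha : 0 < a) (hw : 0 ≤ w) :
    (a ^ (1 / q) * w) ^ p = (a * w) ^ p / a := by
  rw [mul_rpow (by positivity) hw, mul_rpow ha.le hw, ← rpow_mul ha.le, one_div_mul_eq_div,
    hpq.div_conj_eq_sub_one, rpow_sub_one ha.ne']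
  ring

lemma abs_mul_rpow_sub_div_mul_rpow_sub {β e u U v V : ℝ} (hβ : 0 < β) (hu : 0 ≤ u) (hU : 0 ≤ U)
    (hv : 0 ≤ v) (hV : 0 ≤ V) :
    |((β * u) ^ e - (β * U) ^ e) / ((β * V) ^ e - (β * v) ^ e)| =
      |(U ^ e - u ^ e) / (V ^ e - v ^ e)| := by
  rw [mul_rpow hβ.le hu, mul_rpow hβ.le hU, mul_rpow hβ.le hv, mul_rpow hβ.le hV, ← mul_sub,
    ← mul_sub, mul_div_mul_left _ _ (rpow_pos_of_pos hβ e).ne', ← neg_sub, neg_div, abs_neg]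

theorem claim2_derivative_bound_general
    (p q t β : ℝ) (hp : 1 < p) (hpq : 1 / p + 1 / q = 1)
    (hβ : β ∈ Set.Ico (1 / 2 : ℝ) 1)
    (y₀ y₁ : ℝ) (hy₀ : y₀ = t * (1 - β) ^ (1 / p)) (hy₁ : y₁ = t * (1 - β) ^ (-(1 / q)))
    (x : ℝ → ℝ) (hx : ∀ z, x z = (β⁻¹ - 1) ^ (1 / q) * (y₁ - z))
    (δ : ℝ) (hδ : δ = min 0 (2 - p))
    (y ty : ℝ) (hy : y ∈ Set.Ioo (0 : ℝ) y₀) (hty : ty ∈ Set.Ioo y₀ y₁)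
    (heq : y ^ p + x y ^ p = ty ^ p + x ty ^ p) :
    ((x ty * ty) / (x y * y)) ^ δ * ((y₀ - y) / (ty - y₀)) ≤
      |((β * y) ^ (p / q) - ((1 - β) * (y₁ - y)) ^ (p / q)) /
        ((β * ty) ^ (p / q) - ((1 - β) * (y₁ - ty)) ^ (p / q))| := by
  have hPQ : p.HolderConjugate q := holderConjugate_iff.2 ⟨hp, by simpa only [one_div] using hpq⟩
  have hβ₀ : 0 < β := by linarith [hβ.1]
  obtain ⟨ha₀, ha₁⟩ := inv_sub_one_mem_Ioc hβ
  set a := β⁻¹ - 1 with ha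
  have h1β : 1 - β = β * a := by rw [ha]; field_simp
  have hay₁ : a * y₁ = (1 + a) * y₀ := by
    rw [hy₀, hy₁, show 1 / p = 1 + -(1 / q) by linarith, rpow_add (by linarith [hβ.2]),
      rpow_one, ha]
    field_simp
    ring
  have hy_ty : y < ty := hy.2.trans hty.1
  have hσ {z : ℝ} (hz : z ≤ y₁) : 0 ≤ partner a y₁ z := mul_nonneg ha₀.le (sub_nonneg.2 hz)
  have hxp {z : ℝ} (hz : z ≤ y₁) : x z ^ p = partner a y₁ z ^ p / a := by
    rw [hx, rpow_one_div_mul_rpow hPQ ha₀ (sub_nonneg.2 hz), partner]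
  have hratio : (x ty * ty) / (x y * y) = (partner a y₁ ty * ty) / (partner a y₁ y * y) := by
    simp only [hx, partner, mul_assoc]
    rw [mul_div_mul_left _ _ (rpow_pos_of_pos ha₀ _).ne', mul_div_mul_left _ _ ha₀.ne']
  rw [hδ, hratio, hPQ.div_conj_eq_sub_one, h1β, mul_assoc, mul_assoc, ← partner, ← partner,
    abs_mul_rpow_sub_div_mul_rpow_sub hβ₀ hy.1.le (hσ (hy_ty.trans hty.2).le) (hσ hty.2.le)
      (hy.1.trans hy_ty).le]
  refine (secant_ratio_ge_of_energy_eq hp ha₀ ha₁ hay₁ hy hty ?_).trans (le_abs_self _)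
  simpa only [energy, hxp (hy_ty.trans hty.2).le, hxp hty.2.le] using heq

theorem claim2_derivative_bound
    (p q t β : ℝ) (hp : 1 < p) (hpq : 1 / p + 1 / q = 1) (ht : 0 < t)
    (hβ : β ∈ Set.Ico (1 / 2 : ℝ) 1)
    (y₀ y₁ : ℝ) (hy₀ : y₀ = t * (1 - β) ^ (1 / p)) (hy₁ : y₁ = t * (1 - β) ^ (-(1 / q)))
    (x : ℝ → ℝ) (hx : ∀ z, x z = (β⁻¹ - 1) ^ (1 / q) * (y₁ - z))
    (δ : ℝ) (hδ : δ = min 0 (2 - p))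
    (y ty : ℝ) (hy : y ∈ Set.Ioo (0 : ℝ) y₀) (hty : ty ∈ Set.Ioo y₀ y₁)
    (heq : y ^ p + x y ^ p = ty ^ p + x ty ^ p) :
    ((x ty * ty) / (x y * y)) ^ δ * ((y₀ - y) / (ty - y₀)) ≤
      |((β * y) ^ (p / q) - ((1 - β) * (y₁ - y)) ^ (p / q)) /
        ((β * ty) ^ (p / q) - ((1 - β) * (y₁ - ty)) ^ (p / q))| :=
  claim2_derivative_bound_general p q t β hp hpq hβ y₀ y₁ hy₀ hy₁ x hx δ hδ y ty hy hty heq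
end
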